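/- Let f : ℝ^n → ℝ^n be C¹ with nilpotent differential Df(y) at every y (i.e. (Df(y))^n = 0), and let g : ℝ^n → ℝ be C¹ and positive. Define u(t,x) and ρ(t,x) implicitly by u = f(x − u t) and ρ(t,x) = g(x − u(t,x)t), assuming 1 + t Df(x − ut) is invertible so that u is well-defined and C¹. Then (u, ρ) solves the barotropic system u_t + (u·∇)u = 0, ρ_t + ∇·(ρu) = 0. -/

import Mathlib

/-!
Write `A = Df(x - tu)`. Differentiating `u = f(x - tu)` gives
`(1 + tA) Du(δt, δx) = A (δx - δt u)`. In the direction `(1, u)` the right-hand side vanishes,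
so invertibility of `1 + tA` gives `u_t + (u·∇)u = 0`; hence `x - tu` and with it `ρ = g(x - tu)`
are constant along this direction. In the spatial directions the same identity reads
`(1 + tA) ∇u = A`, so `∇u = (1 + tA)⁻¹ A` is nilpotent (the two factors commute), `∇·u = 0`,
and `ρ_t + ∇·(ρu) = (ρ_t + u·∇ρ) + ρ ∇·u = 0`.
-/

/-- Jacobian matrix of a map `ℝ^n → ℝ^n`. -/
noncomputable def Dmat {n : ℕ} (f : (Fin n → ℝ) → (Fin n → ℝ)) (y : Fin n → ℝ) :
    Matrix (Fin n) (Fin n) ℝ :=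
  Matrix.of fun i j => fderiv ℝ f y (Pi.single j 1) i

open Matrix

theorem Dmat_eq_toMatrix' {n : ℕ} (f : (Fin n → ℝ) → (Fin n → ℝ)) (y : Fin n → ℝ) :
    Dmat f y = LinearMap.toMatrix' (fderiv ℝ f y : (Fin n → ℝ) →ₗ[ℝ] Fin n → ℝ) := by
  ext i j
  simp [Dmat, LinearMap.toMatrix'_apply]

theorem Dmat_mulVec {n : ℕ} (f : (Fin n → ℝ) → (Fin n → ℝ)) (y v : Fin n → ℝ) :
    Dmat f y *ᵥ v = fderiv ℝ f y v := by
  rw [Dmat_eq_toMatrix', LinearMap.toMatrix'_mulVec]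
  rfl

theorem ContinuousLinearMap.apply_prod_eq_add_sum {n : ℕ} {E : Type*} [AddCommGroup E]
    [Module ℝ E] [TopologicalSpace E] (L : ℝ × (Fin n → ℝ) →L[ℝ] E) (s : ℝ) (v : Fin n → ℝ) :
    L (s, v) = s • L (1, 0) + ∑ j, v j • L (0, Pi.single j 1) := by
  have hsplit : ((s, v) : ℝ × (Fin n → ℝ))
      = s • ((1 : ℝ), (0 : Fin n → ℝ)) + ∑ j, v j • ((0 : ℝ), (Pi.single j 1 : Fin n → ℝ)) := by
    ext
    · simp [Prod.fst_sum]
    · simp only [Prod.snd_add, Prod.smul_snd, Prod.snd_sum, smul_zero, zero_add]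
      exact congrFun (pi_eq_sum_univ' v) _
  rw [hsplit, map_add, map_sum, L.map_smul]
  simp only [L.map_smul]

theorem Commute.isNilpotent_of_isUnit_mul_eq {R : Type*} [Ring R] {U A M : R} (hU : IsUnit U)
    (hUA : Commute U A) (hA : IsNilpotent A) (h : U * M = A) : IsNilpotent M := by
  obtain ⟨U, rfl⟩ := hU
  have hM : M = ↑U⁻¹ * A := by rw [← h, Units.inv_mul_cancel_left]
  exact hM ▸ hUA.units_inv_left.isNilpotent_mul_left hA

section Characteristics

variable {n : ℕ}

/-- The point `x - t u(t, x)` from which the straight characteristic through `(t, x)` starts. -/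
noncomputable def characteristicFoot (u : ℝ × (Fin n → ℝ) → (Fin n → ℝ)) (z : ℝ × (Fin n → ℝ)) :
    Fin n → ℝ :=
  z.2 - z.1 • u z

noncomputable def spatialJacobian (u : ℝ × (Fin n → ℝ) → (Fin n → ℝ)) (z : ℝ × (Fin n → ℝ)) :
    Matrix (Fin n) (Fin n) ℝ :=
  Matrix.of fun i j => fderiv ℝ u z (0, Pi.single j 1) i

variable {f : (Fin n → ℝ) → (Fin n → ℝ)} {u : ℝ × (Fin n → ℝ) → (Fin n → ℝ)}
  {z : ℝ × (Fin n → ℝ)}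

theorem hasFDerivAt_characteristicFoot (hu : DifferentiableAt ℝ u z) :
    HasFDerivAt (characteristicFoot u) (ContinuousLinearMap.snd ℝ ℝ (Fin n → ℝ) -
      (z.1 • fderiv ℝ u z + (ContinuousLinearMap.fst ℝ ℝ (Fin n → ℝ)).smulRight (u z))) z :=
  hasFDerivAt_snd.sub (hasFDerivAt_fst.smul hu.hasFDerivAt)

theorem differentiableAt_characteristicFoot (hu : DifferentiableAt ℝ u z) :
    DifferentiableAt ℝ (characteristicFoot u) z :=
  (hasFDerivAt_characteristicFoot hu).differentiableAt

theorem fderiv_characteristicFoot_apply (hu : DifferentiableAt ℝ u z) (d : ℝ × (Fin n → ℝ)) :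
    fderiv ℝ (characteristicFoot u) z d = d.2 - (z.1 • fderiv ℝ u z d + d.1 • u z) := by
  rw [(hasFDerivAt_characteristicFoot hu).fderiv]
  simp

theorem one_add_smul_mulVec_fderiv (hf : DifferentiableAt ℝ f (characteristicFoot u z))
    (hu : DifferentiableAt ℝ u z) (himp : ∀ w, u w = f (characteristicFoot u w))
    (d : ℝ × (Fin n → ℝ)) :
    (1 + z.1 • Dmat f (characteristicFoot u z)) *ᵥ fderiv ℝ u z d
      = Dmat f (characteristicFoot u z) *ᵥ (d.2 - d.1 • u z) := by
  set A := Dmat f (characteristicFoot u z)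
  have hchain : fderiv ℝ u z d = A *ᵥ (d.2 - (z.1 • fderiv ℝ u z d + d.1 • u z)) := by
    conv_lhs => rw [show u = f ∘ characteristicFoot u from funext himp]
    rw [fderiv_comp z hf (differentiableAt_characteristicFoot hu),
      ContinuousLinearMap.comp_apply, Dmat_mulVec, fderiv_characteristicFoot_apply hu]
  rw [add_mulVec, one_mulVec, smul_mulVec]
  nth_rewrite 1 [hchain]
  simp only [mulVec_sub, mulVec_add, mulVec_smul]
  abel

theorem fderiv_apply_one_self_eq_zero (hf : DifferentiableAt ℝ f (characteristicFoot u z))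
    (hu : DifferentiableAt ℝ u z) (himp : ∀ w, u w = f (characteristicFoot u w))
    (hinv : IsUnit (1 + z.1 • Dmat f (characteristicFoot u z))) :
    fderiv ℝ u z (1, u z) = 0 := by
  apply mulVec_injective_iff_isUnit.mpr hinv
  rw [one_add_smul_mulVec_fderiv hf hu himp, mulVec_zero, one_smul, sub_self, mulVec_zero]

theorem fderiv_characteristicFoot_apply_one_self
    (hf : DifferentiableAt ℝ f (characteristicFoot u z))
    (hu : DifferentiableAt ℝ u z) (himp : ∀ w, u w = f (characteristicFoot u w))
    (hinv : IsUnit (1 + z.1 • Dmat f (characteristicFoot u z))) :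
    fderiv ℝ (characteristicFoot u) z (1, u z) = 0 := by
  rw [fderiv_characteristicFoot_apply hu, fderiv_apply_one_self_eq_zero hf hu himp hinv]
  simp

theorem fderiv_comp_characteristicFoot_apply_one_self {F : Type*} [NormedAddCommGroup F]
    [NormedSpace ℝ F] {g : (Fin n → ℝ) → F} (hg : DifferentiableAt ℝ g (characteristicFoot u z))
    (hf : DifferentiableAt ℝ f (characteristicFoot u z))
    (hu : DifferentiableAt ℝ u z) (himp : ∀ w, u w = f (characteristicFoot u w))
    (hinv : IsUnit (1 + z.1 • Dmat f (characteristicFoot u z))) :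
    fderiv ℝ (g ∘ characteristicFoot u) z (1, u z) = 0 := by
  rw [fderiv_comp z hg (differentiableAt_characteristicFoot hu), ContinuousLinearMap.comp_apply,
    fderiv_characteristicFoot_apply_one_self hf hu himp hinv, map_zero]

theorem one_add_smul_mul_spatialJacobian (hf : DifferentiableAt ℝ f (characteristicFoot u z))
    (hu : DifferentiableAt ℝ u z) (himp : ∀ w, u w = f (characteristicFoot u w)) :
    (1 + z.1 • Dmat f (characteristicFoot u z)) * spatialJacobian u z
      = Dmat f (characteristicFoot u z) := by
  ext i j
  have h := congrFun (one_add_smul_mulVec_fderiv hf hu himp (0, Pi.single j 1)) i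
  simpa [mulVec, dotProduct, mul_apply, spatialJacobian, Pi.single_apply] using h

theorem trace_spatialJacobian (hf : DifferentiableAt ℝ f (characteristicFoot u z))
    (hu : DifferentiableAt ℝ u z) (himp : ∀ w, u w = f (characteristicFoot u w))
    (hinv : IsUnit (1 + z.1 • Dmat f (characteristicFoot u z)))
    (hnil : IsNilpotent (Dmat f (characteristicFoot u z))) :
    (spatialJacobian u z).trace = 0 := by
  refine (isNilpotent_trace_of_isNilpotent ?_).eq_zero
  refine Commute.isNilpotent_of_isUnit_mul_eq hinv ?_ hnil
    (one_add_smul_mul_spatialJacobian hf hu himp)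
  exact (Commute.one_left _).add_left ((Commute.refl _).smul_left _)

theorem sum_fderiv_mul_apply_single {ρ : ℝ × (Fin n → ℝ) → ℝ} (hρ : DifferentiableAt ℝ ρ z) (hu : DifferentiableAt ℝ u z) :
    ∑ i, fderiv ℝ (fun w => ρ w * u w i) z (0, Pi.single i 1)
      = ρ z * (spatialJacobian u z).trace + ∑ i, u z i * fderiv ℝ ρ z (0, Pi.single i 1) := by
  have hprod (i : Fin n) : fderiv ℝ (fun w => ρ w * u w i) z
      = ρ z • (ContinuousLinearMap.proj i).comp (fderiv ℝ u z) + u z i • fderiv ℝ ρ z := by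
    rw [fderiv_fun_mul hρ (differentiableAt_pi.1 hu i), fderiv_apply hu]
  simp [hprod, Finset.sum_add_distrib, Finset.mul_sum, trace, spatialJacobian]

end Characteristics

theorem barotropic_nilpotent_solution_general {n : ℕ}
    (f : (Fin n → ℝ) → (Fin n → ℝ)) (hf : ContDiff ℝ 1 f)
    (g : (Fin n → ℝ) → ℝ) (hg : ContDiff ℝ 1 g)
    (hnil : ∀ y, Dmat f y ^ n = 0)
    (u : ℝ × (Fin n → ℝ) → (Fin n → ℝ)) (hu : ContDiff ℝ 1 u)
    (himp : ∀ z : ℝ × (Fin n → ℝ), u z = f (z.2 - z.1 • u z))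
    (hinv : ∀ z : ℝ × (Fin n → ℝ),
      IsUnit ((1 : Matrix (Fin n) (Fin n) ℝ) + z.1 • Dmat f (z.2 - z.1 • u z))) :
    (∀ (z : ℝ × (Fin n → ℝ)) (i : Fin n),
      fderiv ℝ u z (1, 0) i + ∑ j, u z j * fderiv ℝ u z (0, Pi.single j 1) i = 0) ∧
    (∀ z : ℝ × (Fin n → ℝ),
      fderiv ℝ (fun w : ℝ × (Fin n → ℝ) => g (w.2 - w.1 • u w)) z (1, 0)
        + ∑ i, fderiv ℝ (fun w : ℝ × (Fin n → ℝ) => g (w.2 - w.1 • u w) * u w i) z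
            ((0 : ℝ), Pi.single i 1) = 0) := by
  have hfd := hf.differentiable one_ne_zero
  have hgd := hg.differentiable one_ne_zero
  have hud := hu.differentiable one_ne_zero
  refine ⟨fun z i => ?_, fun z => ?_⟩
  · have hmaterial := congrFun (fderiv_apply_one_self_eq_zero (hfd _) (hud z) himp (hinv z)) i
    rw [(fderiv ℝ u z).apply_prod_eq_add_sum, one_smul] at hmaterial
    simpa using hmaterial
  · have hρ : DifferentiableAt ℝ (fun w : ℝ × (Fin n → ℝ) => g (w.2 - w.1 • u w)) z :=
      (hgd _).comp z (differentiableAt_characteristicFoot (hud z))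
    have hρ_material : fderiv ℝ (fun w : ℝ × (Fin n → ℝ) => g (w.2 - w.1 • u w)) z (1, u z) = 0 :=
      fderiv_comp_characteristicFoot_apply_one_self (hgd _) (hfd _) (hud z) himp (hinv z)
    have hdiv := trace_spatialJacobian (hfd _) (hud z) himp (hinv z) ⟨n, hnil _⟩
    rw [sum_fderiv_mul_apply_single hρ (hud z), hdiv, mul_zero, zero_add]
    rw [ContinuousLinearMap.apply_prod_eq_add_sum, one_smul] at hρ_material
    simpa using hρ_material

/-- If `Df` is everywhere nilpotent and `g > 0`, then `u = f(x − ut)`,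
`ρ = g(x − ut)` solve the barotropic system `u_t + (u·∇)u = 0`, `ρ_t + ∇·(ρu) = 0`. -/
theorem barotropic_nilpotent_solution {n : ℕ}
    (f : (Fin n → ℝ) → (Fin n → ℝ)) (hf : ContDiff ℝ 1 f)
    (g : (Fin n → ℝ) → ℝ) (hg : ContDiff ℝ 1 g) (hgpos : ∀ y, 0 < g y)
    (hnil : ∀ y, Dmat f y ^ n = 0)
    (u : ℝ × (Fin n → ℝ) → (Fin n → ℝ)) (hu : ContDiff ℝ 1 u)
    (himp : ∀ z : ℝ × (Fin n → ℝ), u z = f (z.2 - z.1 • u z))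
    (hinv : ∀ z : ℝ × (Fin n → ℝ),
      IsUnit ((1 : Matrix (Fin n) (Fin n) ℝ) + z.1 • Dmat f (z.2 - z.1 • u z))) :
    (∀ (z : ℝ × (Fin n → ℝ)) (i : Fin n),
      fderiv ℝ u z (1, 0) i + ∑ j, u z j * fderiv ℝ u z (0, Pi.single j 1) i = 0) ∧
    (∀ z : ℝ × (Fin n → ℝ),
      fderiv ℝ (fun w : ℝ × (Fin n → ℝ) => g (w.2 - w.1 • u w)) z (1, 0)
        + ∑ i, fderiv ℝ (fun w : ℝ × (Fin n → ℝ) => g (w.2 - w.1 • u w) * u w i) z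
            ((0 : ℝ), Pi.single i 1) = 0) :=
  barotropic_nilpotent_solution_general f hf g hg hnil u hu himp hinv
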